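/- Let ρ_λ be an ESG-coherent risk measure (satisfying SUB-M, PH-M, MO-M, LH-M), X a risky bivariate position, and SA = (RF_r, RF_esg) a deterministic ESG safe asset. Assume -(1-λ)RF_r - λRF_esg < κ ≤ ρ_λ(X). Then the minimal weight w ∈ [0,1] such that ρ_λ((1-w)X + w·SA) ≤ κ is w*_λ = (ρ_λ(X) - κ)/((1-λ)RF_r + λRF_esg + ρ_λ(X)). -/
import Mathlib


open MeasureTheory

/-- Hedging with an ESG safe asset: for an ESG-coherent risk measure, the minimal
weight of the ESG safe asset making the portfolio risk at most κ is
(ρ_λ(X) - κ)/((1-λ)RF_r + λRF_esg + ρ_λ(X)). -/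
theorem esg_hedging {Ω : Type*} [MeasureSpace Ω] (lam : ℝ) (hlam : lam ∈ Set.Icc (0:ℝ) 1)
    (ρ : (Ω → ℝ × ℝ) → ℝ)
    (hsub : ∀ X Y : Ω → ℝ × ℝ, ρ (X + Y) ≤ ρ X + ρ Y)
    (hph : ∀ (β : ℝ), 0 ≤ β → ∀ X : Ω → ℝ × ℝ, ρ (β • X) = β * ρ X)
    (hmo : ∀ X Y : Ω → ℝ × ℝ,
      (∀ᵐ ω ∂(volume : Measure Ω), (X ω).1 ≤ (Y ω).1 ∧ (X ω).2 ≤ (Y ω).2) → ρ Y ≤ ρ X)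
    (hlh : ∀ a : ℝ × ℝ, ρ (fun _ => a) = -((1 - lam) * a.1 + lam * a.2))
    (X : Ω → ℝ × ℝ) (RFr RFe κ : ℝ)
    (hκ1 : -(1 - lam) * RFr - lam * RFe < κ) (hκ2 : κ ≤ ρ X) :
    IsLeast {w : ℝ | w ∈ Set.Icc (0:ℝ) 1 ∧
        ρ ((1 - w) • X + fun _ => (w * RFr, w * RFe)) ≤ κ}
      ((ρ X - κ) / ((1 - lam) * RFr + lam * RFe + ρ X)) := by
  set S : ℝ := (1 - lam) * RFr + lam * RFe with hS
  have hSκ : 0 < S + κ := by simp only [hS]; nlinarith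
  have hD : 0 < S + ρ X := by linarith
  -- translation invariance
  have trans : ∀ (Y : Ω → ℝ × ℝ) (a : ℝ × ℝ),
      ρ (Y + fun _ => a) = ρ Y - ((1 - lam) * a.1 + lam * a.2) := by
    intro Y a
    have h1 : ρ (Y + fun _ => a) ≤ ρ Y + ρ (fun _ => a) := hsub _ _
    have h2 : ρ Y ≤ ρ (Y + fun _ => a) + ρ (fun _ => -a) := by
      have h := hsub (Y + fun _ => a) (fun _ => -a)
      have hE : ((Y + fun _ => a) + fun _ => -a) = Y := by
        funext ω; simp
      rwa [hE] at h
    rw [hlh] at h1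
    rw [hlh] at h2
    simp only [Prod.fst_neg, Prod.snd_neg] at h2
    linarith
  -- the portfolio risk formula
  have key : ∀ w : ℝ, w ≤ 1 →
      ρ ((1 - w) • X + fun _ => (w * RFr, w * RFe)) = (1 - w) * ρ X - w * S := by
    intro w hw
    rw [trans ((1 - w) • X) (w * RFr, w * RFe), hph (1 - w) (by linarith) X]
    simp only [hS]; ring
  set w₀ : ℝ := (ρ X - κ) / ((1 - lam) * RFr + lam * RFe + ρ X) with hw₀
  have hw₀' : w₀ = (ρ X - κ) / (S + ρ X) := rfl
  have hw₀0 : 0 ≤ w₀ := by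
    rw [hw₀']; exact div_nonneg (by linarith) hD.le
  have hw₀1 : w₀ ≤ 1 := by
    rw [hw₀', div_le_one hD]; linarith
  constructor
  · refine ⟨⟨hw₀0, hw₀1⟩, ?_⟩
    rw [key w₀ hw₀1]
    have : w₀ * (S + ρ X) = ρ X - κ := by
      rw [hw₀', div_mul_cancel₀ _ hD.ne']
    nlinarith
  · rintro w ⟨⟨hw0, hw1⟩, hw⟩
    rw [key w hw1] at hw
    rw [hw₀', div_le_iff₀ hD]
    nlinarith
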